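/- Let k be an algebraically closed field of characteristic 2, V_4 the Klein four group, and V_1(α) the two-dimensional indecomposable kV_4-module with α ∈ k, α ≠ 0, 1, on which x = 1+g acts by the matrix [[0,1],[0,0]] and y = 1+h by [[0,α],[0,0]]. Then the canonical trace on End(V_1(α)) is an ambidextrous trace: for every kV_4-endomorphism f of V_1(α) ⊗ V_1(α), ⟨tr_L(f)⟩ = ⟨tr_R(f)⟩. -/

import Mathlib

/-
Write `E = [[0,1],[0,0]]`, so that `x` and `y` act on `V₁(α)` through `1 + a E` with `a = 1` and
`a = α`. On `V₁(α) ⊗ V₁(α)` the diagonal action is then `1 + a D + a² Q` with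
`D = E ⊗ 1 + 1 ⊗ E` and `Q = E ⊗ E`; as `α ≠ 0, 1`, commuting with both actions amounts to
commuting with `D` and with `Q`. For the matrix of `f` in the basis `eᵢ ⊗ eⱼ` these two
commutation relations already force the columns at `v₁ = e₀` of the left and the right partial
trace to coincide.
-/

open TensorProduct

/-- The right partial trace of `f : V ⊗ V → V ⊗ V`, computed with respect to the
basis `b`:  `tr_R(f)(v) = ∑ i (id ⊗ b.coord i)(f(v ⊗ b i))`. -/
noncomputable def ptrR {k : Type*} [Field k] {V : Type*} [AddCommGroup V] [Module k V]
    {ι : Type*} [Fintype ι] (b : Module.Basis ι k V)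
    (f : V ⊗[k] V →ₗ[k] V ⊗[k] V) : V →ₗ[k] V :=
  ∑ i : ι, (TensorProduct.rid k V).toLinearMap
      ∘ₗ (TensorProduct.map LinearMap.id (b.coord i))
      ∘ₗ f ∘ₗ ((TensorProduct.mk k V V).flip (b i))

/-- The left partial trace of `f : V ⊗ V → V ⊗ V`, computed with respect to the
basis `b`:  `tr_L(f)(v) = ∑ i (b.coord i ⊗ id)(f(b i ⊗ v))`. -/
noncomputable def ptrL {k : Type*} [Field k] {V : Type*} [AddCommGroup V] [Module k V]
    {ι : Type*} [Fintype ι] (b : Module.Basis ι k V)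
    (f : V ⊗[k] V →ₗ[k] V ⊗[k] V) : V →ₗ[k] V :=
  ∑ i : ι, (TensorProduct.lid k V).toLinearMap
      ∘ₗ (TensorProduct.map (b.coord i) LinearMap.id)
      ∘ₗ f ∘ₗ (TensorProduct.mk k V V (b i))

/-- The action of `x = 1 + g` on `V₁(α)`, i.e. the action of the generator `g`
of the Klein four group, given by the matrix `[[1,1],[0,1]]` (so that `x` acts
by `[[0,1],[0,0]]`). -/
noncomputable def xAct (k : Type*) [Field k] : (Fin 2 → k) →ₗ[k] (Fin 2 → k) :=
  Matrix.toLin' !![1, 1; 0, 1]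

/-- The action of the second generator `h` of the Klein four group on `V₁(α)`,
given by `[[1,α],[0,1]]` (so that `y = 1 + h` acts by `[[0,α],[0,0]]`). -/
noncomputable def yAct (k : Type*) [Field k] (α : k) : (Fin 2 → k) →ₗ[k] (Fin 2 → k) :=
  Matrix.toLin' !![1, α; 0, 1]

open Matrix
open scoped Kronecker

namespace Matrix

variable {R ι κ : Type*} [AddCommMonoid R] [Fintype ι] [Fintype κ]

def partialTraceLeft (M : Matrix (ι × κ) (ι × κ) R) : Matrix κ κ R :=
  fun l j => ∑ i, M (i, l) (i, j)

def partialTraceRight (M : Matrix (ι × κ) (ι × κ) R) : Matrix ι ι R :=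
  fun l j => ∑ i, M (l, i) (j, i)

theorem upperUnitriangular_eq_one_add_smul_single {R : Type*} [Semiring R] (a : R) :
    !![1, a; 0, 1] = 1 + a • single 0 1 1 := by
  ext i j; fin_cases i <;> fin_cases j <;> simp

theorem kronecker_one_add_smul_self {R n : Type*} [CommRing R] [Fintype n] [DecidableEq n]
    (a : R) (N : Matrix n n R) :
    (1 + a • N) ⊗ₖ (1 + a • N) = 1 + a • (N ⊗ₖ 1 + 1 ⊗ₖ N) + a ^ 2 • (N ⊗ₖ N) := by
  simp only [add_kronecker, kronecker_add, one_kronecker_one, smul_kronecker, kronecker_smul]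
  module

theorem partialTraceLeft_eq_partialTraceRight_of_commute {R : Type*} [CommRing R]
    {M : Matrix (Fin 2 × Fin 2) (Fin 2 × Fin 2) R}
    (hD : Commute M (single 0 1 1 ⊗ₖ 1 + 1 ⊗ₖ single 0 1 1))
    (hQ : Commute M (single 0 1 1 ⊗ₖ single 0 1 1)) (l : Fin 2) :
    M.partialTraceLeft l 0 = M.partialTraceRight l 0 := by
  have entry {N : Matrix (Fin 2 × Fin 2) (Fin 2 × Fin 2) R} (h : Commute M N) (r c) :
      (M * N) r c = (N * M) r c := by rw [h.eq]
  -- `E ⊗ E` only maps `e₁ ⊗ e₁` to `e₀ ⊗ e₀`: commuting with it clears column `(0,0)` and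
  -- row `(1,1)` of `M` off the diagonal and forces `M (0,0) (0,0) = M (1,1) (1,1)`.
  have q₁ := entry hQ (0, 1) (1, 1)
  have q₂ := entry hQ (1, 0) (1, 1)
  have q₃ := entry hQ (0, 0) (0, 1)
  have q₄ := entry hQ (0, 0) (1, 0)
  have q₅ := entry hQ (0, 0) (1, 1)
  have d₁ := entry hD (0, 0) (0, 1)
  have d₂ := entry hD (1, 0) (1, 1)
  simp only [mul_apply, add_apply, kroneckerMap_apply, single_apply, one_apply_eq, one_apply_ne,
    Fintype.sum_prod_type, Fin.sum_univ_two, Finset.sum_ite_eq,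
    Finset.sum_const_zero, Finset.mem_univ, Fin.isValue, ne_eq, and_true, true_and, and_false,
    false_and, zero_ne_one, one_ne_zero, not_false_eq_true, ↓reduceIte, ite_self, mul_ite,
    ite_mul, mul_one, one_mul, mul_zero, zero_mul, add_zero, zero_add] at q₁ q₂ q₃ q₄ q₅ d₁ d₂
  fin_cases l <;> simp only [partialTraceLeft, partialTraceRight, Fin.sum_univ_two, Fin.zero_eta,
    Fin.mk_one]
  · linear_combination d₂ + d₁ - q₅
  · linear_combination q₁ - q₂ - q₄ + q₃

end Matrix

namespace Module.Basis

variable {R V W ι κ : Type*} [CommSemiring R] [AddCommMonoid V] [Module R V]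
  [AddCommMonoid W] [Module R W] (b : Basis ι R V) (c : Basis κ R W)

theorem repr_lid_map_coord (i : ι) (x : V ⊗[R] W) (l : κ) :
    c.repr (TensorProduct.lid R W (TensorProduct.map (b.coord i) LinearMap.id x)) l
      = (b.tensorProduct c).repr x (i, l) := by
  induction x using TensorProduct.induction_on with
  | zero => simp
  | tmul v w => simp [mul_comm]
  | add x y hx hy => simp only [map_add, Finsupp.add_apply, hx, hy]

theorem repr_rid_map_coord (i : κ) (x : V ⊗[R] W) (l : ι) :
    b.repr (TensorProduct.rid R V (TensorProduct.map LinearMap.id (c.coord i) x)) l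
      = (b.tensorProduct c).repr x (l, i) := by
  induction x using TensorProduct.induction_on with
  | zero => simp
  | tmul v w => simp
  | add x y hx hy => simp only [map_add, Finsupp.add_apply, hx, hy]

end Module.Basis

section PartialTrace

variable {k V ι : Type*} [Field k] [AddCommGroup V] [Module k V] [Fintype ι] [DecidableEq ι]
  (b : Module.Basis ι k V) (f : V ⊗[k] V →ₗ[k] V ⊗[k] V)

theorem toMatrix_ptrL :
    LinearMap.toMatrix b b (ptrL b f)
      = (LinearMap.toMatrix (b.tensorProduct b) (b.tensorProduct b) f).partialTraceLeft := by
  ext l j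
  simp [ptrL, partialTraceLeft, LinearMap.toMatrix_apply, b.repr_lid_map_coord]

theorem toMatrix_ptrR :
    LinearMap.toMatrix b b (ptrR b f)
      = (LinearMap.toMatrix (b.tensorProduct b) (b.tensorProduct b) f).partialTraceRight := by
  ext l j
  simp [ptrR, partialTraceRight, LinearMap.toMatrix_apply, b.repr_rid_map_coord]

theorem ptrL_apply_eq_ptrR_apply_of_partialTrace_eq (j : ι)
    (h : ∀ l,
      (LinearMap.toMatrix (b.tensorProduct b) (b.tensorProduct b) f).partialTraceLeft l j
      = (LinearMap.toMatrix (b.tensorProduct b) (b.tensorProduct b) f).partialTraceRight l j) :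
    ptrL b f (b j) = ptrR b f (b j) :=
  b.ext_elem fun l => by
    simpa only [← toMatrix_ptrL, ← toMatrix_ptrR, LinearMap.toMatrix_apply] using h l

end PartialTrace

theorem toMatrix_commute_kronecker_of_comp_map_eq {k V W ι κ : Type*} [Field k]
    [AddCommGroup V] [Module k V] [AddCommGroup W] [Module k W]
    [Fintype ι] [DecidableEq ι] [Fintype κ] [DecidableEq κ]
    (b : Module.Basis ι k V) (c : Module.Basis κ k W) {f : V ⊗[k] W →ₗ[k] V ⊗[k] W}
    {g : V →ₗ[k] V} {h : W →ₗ[k] W}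
    (hf : f ∘ₗ TensorProduct.map g h = TensorProduct.map g h ∘ₗ f) :
    Commute (LinearMap.toMatrix (b.tensorProduct c) (b.tensorProduct c) f)
      (LinearMap.toMatrix b b g ⊗ₖ LinearMap.toMatrix c c h) := by
  have := congrArg (LinearMap.toMatrix (b.tensorProduct c) (b.tensorProduct c)) hf
  rwa [LinearMap.toMatrix_comp _ (b.tensorProduct c),
    LinearMap.toMatrix_comp _ (b.tensorProduct c), TensorProduct.toMatrix_map] at this

theorem commute_of_commute_one_add_smul_add_sq_smul {k A : Type*} [Field k] [Ring A]
    [Algebra k A] {M P Q : A} {α : k} (hα0 : α ≠ 0) (hα1 : α ≠ 1)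
    (h₁ : Commute M (1 + P + Q)) (hα : Commute M (1 + α • P + α ^ 2 • Q)) :
    Commute M P ∧ Commute M Q := by
  have hQ' : Commute M ((α * (1 - α)) • Q) := by
    convert ((h₁.smul_right α).sub_right hα).sub_right ((Commute.one_right M).smul_right (α - 1))
      using 1
    module
  have hQ : Commute M Q := by
    have := hQ'.smul_right (α * (1 - α))⁻¹
    rwa [inv_smul_smul₀ (mul_ne_zero hα0 (sub_ne_zero.2 hα1.symm))] at this
  refine ⟨?_, hQ⟩
  convert (h₁.sub_right (Commute.one_right M)).sub_right hQ using 1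
  abel

-- `⟨φ⟩` is encoded as the value `φ v₁`, since `v₁ = Pi.single 0 1` spans the socle of `V₁(α)`.
theorem stmt17_general (k : Type*) [Field k]
    (α : k) (hα0 : α ≠ 0) (hα1 : α ≠ 1) :
    ∀ f : (Fin 2 → k) ⊗[k] (Fin 2 → k) →ₗ[k] (Fin 2 → k) ⊗[k] (Fin 2 → k),
      f ∘ₗ TensorProduct.map (xAct k) (xAct k)
          = TensorProduct.map (xAct k) (xAct k) ∘ₗ f →
      f ∘ₗ TensorProduct.map (yAct k α) (yAct k α)
          = TensorProduct.map (yAct k α) (yAct k α) ∘ₗ f →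
      ptrL (Pi.basisFun k (Fin 2)) f (Pi.single 0 1)
        = ptrR (Pi.basisFun k (Fin 2)) f (Pi.single 0 1) := by
  intro f hx hy
  set b := Pi.basisFun k (Fin 2)
  have hmat (a : k) :
      LinearMap.toMatrix b b (Matrix.toLin' !![1, a; 0, 1]) = 1 + a • single 0 1 1 := by
    rw [LinearMap.toMatrix_eq_toMatrix', LinearMap.toMatrix'_toLin',
      upperUnitriangular_eq_one_add_smul_single]
  have hX := toMatrix_commute_kronecker_of_comp_map_eq b b hx
  have hY := toMatrix_commute_kronecker_of_comp_map_eq b b hy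
  rw [xAct, hmat, kronecker_one_add_smul_self, one_smul, one_pow, one_smul] at hX
  rw [yAct, hmat, kronecker_one_add_smul_self] at hY
  obtain ⟨hD, hQ⟩ := commute_of_commute_one_add_smul_add_sq_smul hα0 hα1 hX hY
  rw [← Pi.basisFun_apply]
  exact ptrL_apply_eq_ptrR_apply_of_partialTrace_eq b f 0
    (partialTraceLeft_eq_partialTraceRight_of_commute hD hQ)

/-- For the two-dimensional indecomposable module `V₁(α)` (α ≠ 0, 1) over the
Klein four group in characteristic 2, the canonical trace is ambidextrous: for
every module endomorphism `f` of `V₁(α) ⊗ V₁(α)` (i.e. every linear endomorphism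
commuting with the diagonal actions of the two generators), `⟨tr_L f⟩ = ⟨tr_R f⟩`.
Since the socle of `V₁(α)` is spanned by `v₁` and `φ(v₁) = ⟨φ⟩⬝v₁` for every
endomorphism `φ`, this is expressed by evaluating the partial traces at `v₁`. -/
theorem stmt17 (k : Type*) [Field k] [IsAlgClosed k] [CharP k 2]
    (α : k) (hα0 : α ≠ 0) (hα1 : α ≠ 1) :
    ∀ f : (Fin 2 → k) ⊗[k] (Fin 2 → k) →ₗ[k] (Fin 2 → k) ⊗[k] (Fin 2 → k),
      f ∘ₗ TensorProduct.map (xAct k) (xAct k)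
          = TensorProduct.map (xAct k) (xAct k) ∘ₗ f →
      f ∘ₗ TensorProduct.map (yAct k α) (yAct k α)
          = TensorProduct.map (yAct k α) (yAct k α) ∘ₗ f →
      ptrL (Pi.basisFun k (Fin 2)) f (Pi.single 0 1)
        = ptrR (Pi.basisFun k (Fin 2)) f (Pi.single 0 1) :=
  stmt17_general k α hα0 hα1
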